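/- arXiv:1812.05174 — 6 statements merged into one kernel-verified Lean document; each statement's English description precedes it below -/
import Mathlib

section
/- Let Λ: ℝ → [0,∞] be a function, and suppose there exist σ > 0 and M ≥ 0 such that Λ(c) ≤ σ²c²/(2(1 − cM)) for all 0 < c < 1/M. Then for all η ≥ 0, the infimum over c > 0 of (Λ(c) + η)/c is at most √(2σ²η) + Mη. -/
open ENNReal Real

/-- Bernstein-type bound on the UQ optimization problem `Ξ(Λ,η) = inf_{c>0} (Λ(c)+η)/c`:
if `Λ(c) ≤ σ²c²/(2(1 - cM))` for all `0 < c < 1/M`, then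
`inf_{c>0} (Λ(c)+η)/c ≤ √(2σ²η) + Mη` for all `η ≥ 0`. -/
theorem bernstein_UQ_bound (Λ : ℝ → ℝ≥0∞) (σ M : ℝ) (hσ : 0 < σ) (hM : 0 ≤ M)
    (hΛ : ∀ c : ℝ, 0 < c → c * M < 1 →
      Λ c ≤ ENNReal.ofReal (σ ^ 2 * c ^ 2 / (2 * (1 - c * M))))
    (η : ℝ) (hη : 0 ≤ η) :
    ⨅ c : {c : ℝ // 0 < c}, (Λ c + ENNReal.ofReal η) / ENNReal.ofReal (c : ℝ) ≤
      ENNReal.ofReal (Real.sqrt (2 * σ ^ 2 * η) + M * η) := by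
  rcases eq_or_lt_of_le hη with hη0 | hηpos
  · -- η = 0 case
    rw [← hη0]
    simp only [mul_zero, add_zero, Real.sqrt_zero, ENNReal.ofReal_zero]
    refine ENNReal.le_of_forall_pos_le_add fun ε hε _ => ?_
    rw [zero_add]
    set c : ℝ := min ((ε : ℝ) / σ ^ 2) (1 / (2 * (M + 1))) with hcdef
    have hc0 : 0 < c := lt_min (by positivity) (by positivity)
    have hcM : c * M < 1 := by
      have h1 : c ≤ 1 / (2 * (M + 1)) := min_le_right _ _
      have : c * M ≤ (1 / (2 * (M + 1))) * M := by
        apply mul_le_mul_of_nonneg_right h1 hM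
      have hden : 0 < 2 * (M + 1) := by positivity
      rw [div_mul_eq_mul_div, one_mul] at this
      have : c * M ≤ M / (2 * (M + 1)) := this
      have h2 : M / (2 * (M + 1)) < 1 := by
        rw [div_lt_one hden]; linarith
      linarith
    refine le_trans (iInf_le _ ⟨c, hc0⟩) ?_
    have hΛc := hΛ c hc0 hcM
    have hbound : Λ c / ENNReal.ofReal c ≤
        ENNReal.ofReal (σ ^ 2 * c ^ 2 / (2 * (1 - c * M))) / ENNReal.ofReal c := by
      gcongr
    refine le_trans hbound ?_
    rw [← ENNReal.ofReal_div_of_pos hc0]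
    have hreal : σ ^ 2 * c ^ 2 / (2 * (1 - c * M)) / c ≤ (ε : ℝ) := by
      have h1 : c ≤ (ε : ℝ) / σ ^ 2 := min_le_left _ _
      have h2 : c ≤ 1 / (2 * (M + 1)) := min_le_right _ _
      have hcM2 : c * M ≤ 1 / 2 := by
        have hden : (0:ℝ) < 2 * (M + 1) := by positivity
        have h4 : c * M ≤ M / (2 * (M + 1)) := by
          calc c * M ≤ (1 / (2 * (M + 1))) * M := mul_le_mul_of_nonneg_right h2 hM
            _ = M / (2 * (M + 1)) := by ring
        have h5 : M / (2 * (M + 1)) ≤ 1 / 2 := by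
          rw [div_le_iff₀ hden]; linarith
        linarith
      have hd : (1 : ℝ) / 2 ≤ 1 - c * M := by linarith
      have hval : σ ^ 2 * c ^ 2 / (2 * (1 - c * M)) / c = σ ^ 2 * c / (2 * (1 - c * M)) := by
        field_simp
      rw [hval]
      have hden2 : (1 : ℝ) ≤ 2 * (1 - c * M) := by linarith
      have hA : σ ^ 2 * c / (2 * (1 - c * M)) ≤ σ ^ 2 * c := by
        rw [div_le_iff₀ (by linarith : (0:ℝ) < 2 * (1 - c * M))]
        have := mul_le_mul_of_nonneg_left hden2 (by positivity : (0:ℝ) ≤ σ ^ 2 * c)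
        linarith
      have hB : σ ^ 2 * c ≤ (ε : ℝ) := by
        have := mul_le_mul_of_nonneg_left h1 (sq_nonneg σ)
        rwa [mul_div_cancel₀ _ (by positivity : (σ : ℝ) ^ 2 ≠ 0)] at this
      linarith
    calc ENNReal.ofReal (σ ^ 2 * c ^ 2 / (2 * (1 - c * M)) / c) ≤ ENNReal.ofReal (ε : ℝ) :=
          ENNReal.ofReal_le_ofReal hreal
      _ = (ε : ℝ≥0∞) := ENNReal.ofReal_coe_nnreal
  · -- η > 0 case
    set s := Real.sqrt (2 * η) with hs_def
    have hs0 : 0 < s := Real.sqrt_pos.mpr (by linarith)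
    have hs2 : s ^ 2 = 2 * η := Real.sq_sqrt (by linarith)
    set t := s / σ with ht_def
    have ht0 : 0 < t := div_pos hs0 hσ
    have hden : 0 < 1 + M * t := by positivity
    set c := t / (1 + M * t) with hc_def
    have hc0 : 0 < c := div_pos ht0 hden
    have hcM : c * M < 1 := by
      rw [hc_def, div_mul_eq_mul_div, div_lt_one hden]
      nlinarith
    have h1mc : 1 - c * M = 1 / (1 + M * t) := by
      rw [hc_def]; field_simp; ring
    have key : σ ^ 2 * c ^ 2 / (2 * (1 - c * M)) = η / (1 + M * t) := by
      rw [h1mc, hc_def]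
      have hσ2 : σ ^ 2 * t ^ 2 = 2 * η := by
        rw [ht_def]; field_simp; nlinarith
      field_simp
      nlinarith [hσ2]
    have hsq : Real.sqrt (2 * σ ^ 2 * η) = σ * s := by
      rw [hs_def, show 2 * σ ^ 2 * η = σ ^ 2 * (2 * η) by ring,
        Real.sqrt_mul (sq_nonneg σ), Real.sqrt_sq hσ.le]
    refine le_trans (iInf_le _ ⟨c, hc0⟩) ?_
    have hΛc := hΛ c hc0 hcM
    rw [key] at hΛc
    calc (Λ c + ENNReal.ofReal η) / ENNReal.ofReal c
        ≤ (ENNReal.ofReal (η / (1 + M * t)) + ENNReal.ofReal η) / ENNReal.ofReal c := by gcongr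
      _ = ENNReal.ofReal ((η / (1 + M * t) + η) / c) := by
          rw [← ENNReal.ofReal_add (by positivity) hη, ← ENNReal.ofReal_div_of_pos hc0]
      _ ≤ ENNReal.ofReal (Real.sqrt (2 * σ ^ 2 * η) + M * η) := by
          apply ENNReal.ofReal_le_ofReal
          rw [hsq]
          have : (η / (1 + M * t) + η) / c = σ * s + M * η := by
            rw [hc_def, ht_def]
            field_simp
            nlinarith [hs2, hs0, hσ, hden]
          rw [this]
end

section
/- Let P and P̃ be probability measures on a measurable space with R(P̃‖P) < ∞ (relative entropy finite), and let f be a measurable function such that E_P[e^{cf}] < ∞ for some c > 0 and E_P[e^{-cf}] < ∞ for some c > 0. Then f ∈ L¹(P̃) and E_{P̃}[f] − E_P[f] ≤ inf_{c>0} (Λ(c) + R(P̃‖P))/c, where Λ(c) = log E_P[e^{c(f − E_P[f])}]. -/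
open MeasureTheory Real ENNReal Classical

lemma key_ineq (a b : ℝ) (ha : 0 ≤ a) : a * b ≤ a * Real.log a - a + Real.exp b := by
  rcases eq_or_lt_of_le ha with h | h
  · simp [← h, (Real.exp_pos b).le]
  · have h1 : (b - Real.log a) + 1 ≤ Real.exp (b - Real.log a) := Real.add_one_le_exp _
    have h2 : a * ((b - Real.log a) + 1) ≤ a * Real.exp (b - Real.log a) :=
      mul_le_mul_of_nonneg_left h1 ha
    have h3 : a * Real.exp (b - Real.log a) = Real.exp b := by
      rw [Real.exp_sub, Real.exp_log h]; field_simp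
    nlinarith

/-- The Kullback–Leibler divergence (relative entropy) `R(ν‖μ)`, equal to
`∫ log(dν/dμ) dν` when `ν ≪ μ` and this integral exists, and `+∞` otherwise. -/
noncomputable def relEnt {Ω : Type*} [MeasurableSpace Ω] (ν μ : Measure Ω) : ℝ≥0∞ :=
  if ν ≪ μ ∧ Integrable (fun x => Real.log (ν.rnDeriv μ x).toReal) ν then
    ENNReal.ofReal (∫ x, Real.log (ν.rnDeriv μ x).toReal ∂ν)
  else ⊤

/-- Gibbs information inequality (upper bound): if `R(P̃‖P) < ∞` and `f` has a finite
moment generating function `E_P[e^{±c₀ f}] < ∞` for some `c₀ > 0`, then `f ∈ L¹(P̃)` and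
`E_{P̃}[f] − E_P[f] ≤ inf_{c>0} (Λ(c) + R(P̃‖P))/c`, where
`Λ(c) = log E_P[e^{c(f − E_P[f])}]`. -/
theorem gibbs_information_inequality {Ω : Type*} [MeasurableSpace Ω]
    (P Ptilde : Measure Ω) [IsProbabilityMeasure P] [IsProbabilityMeasure Ptilde]
    (f : Ω → ℝ) (hf : Measurable f)
    (hR : relEnt Ptilde P < ⊤)
    (hmgf1 : ∃ c : ℝ, 0 < c ∧ Integrable (fun x => Real.exp (c * f x)) P)
    (hmgf2 : ∃ c : ℝ, 0 < c ∧ Integrable (fun x => Real.exp (-c * f x)) P) :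
    Integrable f Ptilde ∧
      ∀ c : ℝ, 0 < c →
        Integrable (fun x => Real.exp (c * (f x - ∫ y, f y ∂P))) P →
        (∫ x, f x ∂Ptilde) - (∫ x, f x ∂P) ≤
          (Real.log (∫ x, Real.exp (c * (f x - ∫ y, f y ∂P)) ∂P) +
            (relEnt Ptilde P).toReal) / c := by
  have hcond : Ptilde ≪ P ∧
      Integrable (fun x => Real.log (Ptilde.rnDeriv P x).toReal) Ptilde := by
    by_contra h
    rw [relEnt, if_neg h] at hR
    exact lt_irrefl _ hR
  obtain ⟨hac, hlog⟩ := hcond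
  set ρ : Ω → ℝ := fun x => (Ptilde.rnDeriv P x).toReal with hρdef
  have hρmeas : Measurable ρ := (Measure.measurable_rnDeriv _ _).ennreal_toReal
  have hρnn : ∀ x, 0 ≤ ρ x := fun x => ENNReal.toReal_nonneg
  have hρlog : Integrable (fun x => ρ x • Real.log (ρ x)) P :=
    (integrable_rnDeriv_smul_iff hac).mpr hlog
  have hρint : Integrable ρ P := Measure.integrable_toReal_rnDeriv
  -- Step 1: integrability of f w.r.t. Ptilde
  obtain ⟨c₁, hc₁, hI₁⟩ := hmgf1
  obtain ⟨c₂, hc₂, hI₂⟩ := hmgf2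
  set c0 := min c₁ c₂ with hc0def
  have hc0 : 0 < c0 := lt_min hc₁ hc₂
  have hExpAbs : Integrable (fun x => Real.exp (c0 * |f x|)) P := by
    refine (hI₁.add hI₂).mono' ((hf.abs.const_mul c0).exp).aestronglyMeasurable ?_
    filter_upwards with x
    simp only [Pi.add_apply]
    rw [Real.norm_eq_abs, abs_of_pos (Real.exp_pos _)]
    rcases le_or_gt 0 (f x) with hfx | hfx
    · have h1 : c0 * |f x| ≤ c₁ * f x := by
        rw [abs_of_nonneg hfx]
        exact mul_le_mul_of_nonneg_right (min_le_left _ _) hfx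
      have := Real.exp_le_exp.mpr h1
      have := (Real.exp_pos (-c₂ * f x)).le
      linarith
    · have h1 : c0 * |f x| ≤ -c₂ * f x := by
        rw [abs_of_neg hfx]
        nlinarith [min_le_right c₁ c₂]
      have := Real.exp_le_exp.mpr h1
      have := (Real.exp_pos (c₁ * f x)).le
      linarith
  have hfint : Integrable f Ptilde := by
    rw [← integrable_rnDeriv_smul_iff hac]
    have hmaj : Integrable
        (fun x => (ρ x • Real.log (ρ x) - ρ x + Real.exp (c0 * |f x|)) / c0) P :=
      ((hρlog.sub hρint).add hExpAbs).div_const c0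
    refine hmaj.mono' (hρmeas.aestronglyMeasurable.smul hf.aestronglyMeasurable) ?_
    filter_upwards with x
    rw [Real.norm_eq_abs, smul_eq_mul, abs_mul, abs_of_nonneg (hρnn x), le_div_iff₀ hc0]
    have := key_ineq (ρ x) (c0 * |f x|) (hρnn x)
    simp only [smul_eq_mul] at this ⊢
    nlinarith
  refine ⟨hfint, ?_⟩
  intro c hc hZ
  set m := ∫ y, f y ∂P with hm
  set Z := ∫ x, Real.exp (c * (f x - m)) ∂P with hZdef
  have hZpos : 0 < Z := integral_exp_pos hZ
  set g : Ω → ℝ := fun x => c * (f x - m) - Real.log Z with hg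
  have hexpg : (fun x => Real.exp (g x)) = fun x => Real.exp (c * (f x - m)) / Z := by
    funext x
    rw [hg, Real.exp_sub, Real.exp_log hZpos]
  have hexpgint : Integrable (fun x => Real.exp (g x)) P := by
    rw [hexpg]; exact hZ.div_const Z
  have hintexpg : ∫ x, Real.exp (g x) ∂P = 1 := by
    rw [hexpg, integral_div]
    field_simp
    exact hZdef.symm
  have h2int : Integrable (fun x => c * (f x - m)) Ptilde :=
    (hfint.sub (integrable_const m)).const_mul c
  have hgint : Integrable g Ptilde := h2int.sub (integrable_const _)
  have hρg : Integrable (fun x => ρ x • g x) P :=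
    (integrable_rnDeriv_smul_iff hac).mpr hgint
  have hmono : ∫ x, ρ x • g x ∂P ≤
      ∫ x, (ρ x • Real.log (ρ x) - ρ x + Real.exp (g x)) ∂P := by
    refine integral_mono hρg ((hρlog.sub hρint).add hexpgint) fun x => ?_
    simpa [smul_eq_mul] using key_ineq (ρ x) (g x) (hρnn x)
  have hLHS : ∫ x, ρ x • g x ∂P = ∫ x, g x ∂Ptilde := integral_rnDeriv_smul hac
  have hintg : ∫ x, g x ∂Ptilde = c * ((∫ x, f x ∂Ptilde) - m) - Real.log Z := by
    have e1 : ∫ x, g x ∂Ptilde =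
        (∫ x, c * (f x - m) ∂Ptilde) - ∫ _x, Real.log Z ∂Ptilde :=
      integral_sub h2int (integrable_const _)
    have e2 : ∫ x, c * (f x - m) ∂Ptilde = c * ∫ x, (f x - m) ∂Ptilde :=
      integral_const_mul c _
    have e3 : ∫ x, (f x - m) ∂Ptilde = (∫ x, f x ∂Ptilde) - ∫ _x, m ∂Ptilde :=
      integral_sub hfint (integrable_const m)
    rw [e1, e2, e3]
    simp
  have hRHS : ∫ x, (ρ x • Real.log (ρ x) - ρ x + Real.exp (g x)) ∂P =
      (∫ x, Real.log (ρ x) ∂Ptilde) - 1 + 1 := by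
    have e4 : ∫ x, (ρ x • Real.log (ρ x) - ρ x + Real.exp (g x)) ∂P =
        (∫ x, (ρ x • Real.log (ρ x) - ρ x) ∂P) + ∫ x, Real.exp (g x) ∂P :=
      integral_add (hρlog.sub hρint) hexpgint
    have e5 : ∫ x, (ρ x • Real.log (ρ x) - ρ x) ∂P =
        (∫ x, ρ x • Real.log (ρ x) ∂P) - ∫ x, ρ x ∂P :=
      integral_sub hρlog hρint
    have e6 : ∫ x, ρ x • Real.log (ρ x) ∂P = ∫ x, Real.log (ρ x) ∂Ptilde :=
      integral_rnDeriv_smul hac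
    have e7 : ∫ x, ρ x ∂P = 1 := by
      rw [hρdef, Measure.integral_toReal_rnDeriv hac, probReal_univ]
    rw [e4, e5, e6, e7, hintexpg]
  have hRval : (∫ x, Real.log (ρ x) ∂Ptilde) ≤ (relEnt Ptilde P).toReal := by
    rw [relEnt, if_pos ⟨hac, hlog⟩, ENNReal.toReal_ofReal']
    exact le_max_left _ _
  rw [le_div_iff₀ hc]
  have := hmono
  rw [hLHS, hintg, hRHS] at this
  linarith
end

section
/- Let P be a probability measure and f a measurable function with E_P[e^f] < ∞. Then log E_P[e^f] = sup over probability measures P̃ with R(P̃‖P) < ∞ of (E_{P̃}[f] − R(P̃‖P)), and the supremum is attained exactly when dP̃ = e^{f − log E_P[e^f]} dP. -/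
open MeasureTheory Real ENNReal Classical


lemma sub_one_le_mul_log {t : ℝ} (ht : 0 ≤ t) : t - 1 ≤ t * Real.log t := by
  rcases eq_or_lt_of_le ht with h | h
  · simp [← h]
  · have h1 : Real.log t⁻¹ ≤ t⁻¹ - 1 := Real.log_le_sub_one_of_pos (inv_pos.mpr h)
    rw [Real.log_inv] at h1
    have h2 : t * t⁻¹ = 1 := mul_inv_cancel₀ h.ne'
    nlinarith [mul_le_mul_of_nonneg_left h1 ht]

lemma sub_one_lt_mul_log {t : ℝ} (ht : 0 ≤ t) (hne : t ≠ 1) : t - 1 < t * Real.log t := by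
  rcases eq_or_lt_of_le ht with h | h
  · simp [← h]
  · have h1 : Real.log t⁻¹ < t⁻¹ - 1 :=
      Real.log_lt_sub_one_of_pos (inv_pos.mpr h) (by simp [inv_eq_one, hne])
    rw [Real.log_inv] at h1
    have h2 : t * t⁻¹ = 1 := mul_inv_cancel₀ h.ne'
    nlinarith [mul_lt_mul_of_pos_left h1 h]

/-- Nonnegativity of KL divergence, and the equality case. -/
lemma kl_key {Ω : Type*} [MeasurableSpace Ω] (Q R : Measure Ω)
    [IsProbabilityMeasure Q] [IsProbabilityMeasure R] (hQR : Q ≪ R)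
    (hintQ : Integrable (llr Q R) Q) :
    0 ≤ ∫ x, llr Q R x ∂Q ∧ (∫ x, llr Q R x ∂Q = 0 → Q = R) := by
  set g : Ω → ℝ := fun x => (Q.rnDeriv R x).toReal with hg
  have hg_meas : Measurable g := (Measure.measurable_rnDeriv Q R).ennreal_toReal
  have hg_nonneg : ∀ x, 0 ≤ g x := fun x => ENNReal.toReal_nonneg
  have h_change : ∫ x, g x * llr Q R x ∂ R = ∫ x, llr Q R x ∂Q := by
    simpa [smul_eq_mul] using integral_rnDeriv_smul hQR (f := llr Q R)
  have h_int_R : Integrable (fun x => g x * llr Q R x) R := by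
    simpa [smul_eq_mul] using (integrable_rnDeriv_smul_iff hQR (f := llr Q R)).mpr hintQ
  have h_int_g : Integrable g R := Measure.integrable_toReal_rnDeriv
  have h_one : ∫ x, g x ∂ R = 1 := by
    rw [hg, Measure.integral_toReal_rnDeriv hQR]; simp
  set F : Ω → ℝ := fun x => g x * llr Q R x - (g x - 1) with hF
  have hF_nonneg : ∀ x, 0 ≤ F x := by
    intro x
    have := sub_one_le_mul_log (hg_nonneg x)
    simp only [hF, llr]
    linarith [this]
  have hF_int : Integrable F R := h_int_R.sub (h_int_g.sub (integrable_const 1))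
  have hF_integral : ∫ x, F x ∂ R = ∫ x, llr Q R x ∂Q := by
    have h1 : Integrable (fun x => g x - 1) R := h_int_g.sub (integrable_const 1)
    calc ∫ x, F x ∂ R = ∫ x, (g x * llr Q R x - (g x - 1)) ∂ R := rfl
    _ = (∫ x, g x * llr Q R x ∂ R) - ∫ x, (g x - 1) ∂ R := integral_sub h_int_R h1
    _ = (∫ x, g x * llr Q R x ∂ R) - ((∫ x, g x ∂ R) - 1) := by
        rw [integral_sub h_int_g (integrable_const 1)]; simp
    _ = ∫ x, llr Q R x ∂Q := by rw [h_change, h_one]; ring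
  constructor
  · rw [← hF_integral]
    exact integral_nonneg hF_nonneg
  · intro h0
    have hF0 : F =ᵐ[R] 0 := by
      rw [← integral_eq_zero_iff_of_nonneg hF_nonneg hF_int, hF_integral, h0]
    have hg1 : g =ᵐ[R] fun _ => 1 := by
      filter_upwards [hF0] with x hx
      by_contra hne
      have := sub_one_lt_mul_log (hg_nonneg x) hne
      simp only [hF, llr, Pi.zero_apply] at hx
      linarith
    have h_rn1 : Q.rnDeriv R =ᵐ[R] fun _ => (1 : ℝ≥0∞) := by
      filter_upwards [hg1, Measure.rnDeriv_lt_top Q R] with x hx hlt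
      have : (Q.rnDeriv R x).toReal = (1 : ℝ≥0∞).toReal := by simpa [hg] using hx
      exact (ENNReal.toReal_eq_toReal_iff' hlt.ne (by simp)).mp this
    calc Q = R.withDensity (Q.rnDeriv R) := (Measure.withDensity_rnDeriv_eq Q R hQR).symm
    _ = R.withDensity (fun _ => (1 : ℝ≥0∞)) := withDensity_congr_ae h_rn1
    _ = R := by simp

lemma relEnt_lt_top_iff {Ω : Type*} [MeasurableSpace Ω] {Q P : Measure Ω} :
    relEnt Q P < ⊤ ↔ Q ≪ P ∧ Integrable (llr Q P) Q := by
  rw [relEnt]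
  split_ifs with h
  · simpa [ENNReal.ofReal_lt_top, llr_def] using h
  · simpa [llr_def] using h

lemma relEnt_toReal {Ω : Type*} [MeasurableSpace Ω] {Q P : Measure Ω}
    [IsProbabilityMeasure Q] [IsProbabilityMeasure P]
    (hQP : Q ≪ P) (hintQ : Integrable (llr Q P) Q) :
    (relEnt Q P).toReal = ∫ x, llr Q P x ∂Q := by
  rw [relEnt, if_pos ⟨hQP, hintQ⟩]
  exact ENNReal.toReal_ofReal (kl_key Q P hQP hintQ).1

/-- The Gibbs inequality together with its equality case. -/
lemma gibbs_ineq {Ω : Type*} [MeasurableSpace Ω] (P : Measure Ω) [IsProbabilityMeasure P]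
    {f : Ω → ℝ} (hint : Integrable (fun x => Real.exp (f x)) P)
    (Q : Measure Ω) [IsProbabilityMeasure Q] (hQP : Q ≪ P)
    (hllr : Integrable (llr Q P) Q) (hfQ : Integrable f Q) :
    (∫ x, f x ∂Q) - ∫ x, llr Q P x ∂Q ≤ Real.log (∫ x, Real.exp (f x) ∂P) ∧
      ((∫ x, f x ∂Q) - ∫ x, llr Q P x ∂Q = Real.log (∫ x, Real.exp (f x) ∂P) →
        Q = P.tilted f) := by
  haveI : IsProbabilityMeasure (P.tilted f) := isProbabilityMeasure_tilted hint
  have hQQs : Q ≪ P.tilted f := hQP.trans (absolutelyContinuous_tilted hint)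
  have hllrs : Integrable (llr Q (P.tilted f)) Q :=
    integrable_llr_tilted_right hQP hfQ hllr hint
  have hI : ∫ x, llr Q (P.tilted f) x ∂Q
      = ∫ x, llr Q P x ∂Q - ∫ x, f x ∂Q + Real.log (∫ x, Real.exp (f x) ∂P) :=
    integral_llr_tilted_right hQP hfQ hint hllr
  obtain ⟨h0, heq⟩ := kl_key Q (P.tilted f) hQQs hllrs
  constructor
  · linarith [h0, hI.le, hI.ge]
  · intro h
    exact heq (by rw [hI]; linarith)

/-- The Gibbs variational principle: `log E_P[e^f]` is the least upper bound of
`E_{P̃}[f] − R(P̃‖P)` over probability measures `P̃` with `R(P̃‖P) < ∞`, and the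
supremum is attained exactly at the tilted measure `dP̃ = e^{f − log E_P[e^f]} dP`. -/
theorem gibbs_variational_principle {Ω : Type*} [MeasurableSpace Ω]
    (P : Measure Ω) [IsProbabilityMeasure P] (f : Ω → ℝ) (hf : Measurable f)
    (hint : Integrable (fun x => Real.exp (f x)) P) :
    IsLUB {r : ℝ | ∃ Q : Measure Ω, IsProbabilityMeasure Q ∧ relEnt Q P < ⊤ ∧
        Integrable f Q ∧ r = (∫ x, f x ∂Q) - (relEnt Q P).toReal}
      (Real.log (∫ x, Real.exp (f x) ∂P)) ∧
    ∀ Q : Measure Ω, IsProbabilityMeasure Q → relEnt Q P < ⊤ → Integrable f Q →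
      ((∫ x, f x ∂Q) - (relEnt Q P).toReal = Real.log (∫ x, Real.exp (f x) ∂P) ↔
        Q = P.withDensity (fun x =>
          ENNReal.ofReal (Real.exp (f x - Real.log (∫ y, Real.exp (f y) ∂P))))) := by
  have hZpos : 0 < ∫ x, Real.exp (f x) ∂P := integral_exp_pos hint
  have h_tilt_eq : P.tilted f = P.withDensity (fun x =>
      ENNReal.ofReal (Real.exp (f x - Real.log (∫ y, Real.exp (f y) ∂P)))) := by
    rw [Measure.tilted]
    congr 1
    funext x
    rw [Real.exp_sub, Real.exp_log hZpos]
  constructor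
  · constructor
    · rintro r ⟨Q, hQprob, hlt, hfQ, rfl⟩
      haveI := hQprob
      obtain ⟨hQP, hllr⟩ := relEnt_lt_top_iff.mp hlt
      rw [relEnt_toReal hQP hllr]
      exact (gibbs_ineq P hint Q hQP hllr hfQ).1
    · intro b hb
      have key : ∀ n : ℕ, Real.log (∫ x, Real.exp (min (f x) n) ∂P) ≤ b := by
        intro n
        set fn : Ω → ℝ := fun x => min (f x) n with hfn_def
        have hfn_meas : Measurable fn := hf.min measurable_const
        have h_exp_n : Integrable (fun x => Real.exp (fn x)) P := by
          refine hint.mono hfn_meas.exp.aestronglyMeasurable (ae_of_all _ fun x => ?_)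
          simp only [Real.norm_eq_abs, abs_of_pos (Real.exp_pos _)]
          exact Real.exp_le_exp.mpr (min_le_left _ _)
        have hZn_pos : 0 < ∫ x, Real.exp (fn x) ∂P := integral_exp_pos h_exp_n
        set Qn := P.tilted fn with hQn_def
        haveI : IsProbabilityMeasure Qn := isProbabilityMeasure_tilted h_exp_n
        have hQnP : Qn ≪ P := tilted_absolutelyContinuous P fn
        have hb1 : Integrable (fun x => Real.exp (fn x) * f x) P := by
          refine Integrable.mono ((integrable_const 1).add (hint.const_mul (Real.exp n)))
            (hfn_meas.exp.mul hf).aestronglyMeasurable (ae_of_all _ fun x => ?_)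
          have hrhs : (0:ℝ) < 1 + Real.exp n * Real.exp (f x) := by positivity
          rw [Real.norm_eq_abs, Real.norm_eq_abs]
          simp only [Pi.add_apply]
          rw [abs_of_pos hrhs, abs_mul, abs_of_pos (Real.exp_pos _)]
          rcases le_or_gt (f x) 0 with hle | hpos
          · have hmin : fn x = f x := min_eq_left (hle.trans (Nat.cast_nonneg n))
            rw [hmin, abs_of_nonpos hle]
            have hmul1 : Real.exp (f x) * Real.exp (-(f x)) = 1 := by
              rw [← Real.exp_add]; simp
            nlinarith [Real.add_one_le_exp (-(f x)), Real.exp_pos (f x),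
              Real.exp_pos (-(f x)), mul_pos (Real.exp_pos (n:ℝ)) (Real.exp_pos (f x))]
          · have h2 : Real.exp (fn x) ≤ Real.exp n :=
              Real.exp_le_exp.mpr (min_le_right _ _)
            have h3 : f x ≤ Real.exp (f x) := by linarith [Real.add_one_le_exp (f x)]
            rw [abs_of_pos hpos]
            nlinarith [Real.exp_pos (fn x), Real.exp_pos (n:ℝ)]
        have h_f_Qn : Integrable f Qn := by
          rw [hQn_def, Measure.tilted, integrable_withDensity_iff_integrable_smul'
            ((hfn_meas.exp.div_const _).ennreal_ofReal)
            (ae_of_all _ fun x => ENNReal.ofReal_lt_top)]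
          have heq : (fun x => (ENNReal.ofReal (Real.exp (fn x) /
                ∫ x, Real.exp (fn x) ∂P)).toReal • f x)
              = fun x => (Real.exp (fn x) * f x) / (∫ x, Real.exp (fn x) ∂P) := by
            funext x
            rw [ENNReal.toReal_ofReal (by positivity), smul_eq_mul]
            ring
          rw [heq]
          exact hb1.div_const _
        have h_fn_Qn : Integrable fn Qn := by
          refine Integrable.mono (h_f_Qn.abs.add (integrable_const (n : ℝ)))
            hfn_meas.aestronglyMeasurable (ae_of_all _ fun x => ?_)
          have hrhs : (0:ℝ) ≤ |f x| + n := by positivity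
          rw [Real.norm_eq_abs, Real.norm_eq_abs]
          simp only [Pi.add_apply]
          rw [abs_of_nonneg hrhs]
          rcases min_cases (f x) ((n:ℕ):ℝ) with ⟨h,_⟩|⟨h,_⟩ <;>
            rw [hfn_def] <;> simp only [] <;> rw [h]
          · have := Nat.cast_nonneg (α := ℝ) n; linarith
          · rw [abs_of_nonneg (Nat.cast_nonneg n)]
            linarith [abs_nonneg (f x)]
        have h_llr_eq : llr Qn P =ᵐ[Qn]
            fun x => fn x - Real.log (∫ x, Real.exp (fn x) ∂P) :=
          hQnP.ae_le (log_rnDeriv_tilted_left_self h_exp_n)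
        have h_llr_int : Integrable (llr Qn P) Qn := by
          rw [integrable_congr h_llr_eq]
          exact h_fn_Qn.sub (integrable_const _)
        have h_kl : ∫ x, llr Qn P x ∂Qn
            = (∫ x, fn x ∂Qn) - Real.log (∫ x, Real.exp (fn x) ∂P) := by
          rw [integral_congr_ae h_llr_eq, integral_sub h_fn_Qn (integrable_const _),
            integral_const]
          simp
        have h_le_b : (∫ x, f x ∂Qn) - (relEnt Qn P).toReal ≤ b :=
          hb ⟨Qn, inferInstance, relEnt_lt_top_iff.mpr ⟨hQnP, h_llr_int⟩, h_f_Qn, rfl⟩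
        rw [relEnt_toReal hQnP h_llr_int, h_kl] at h_le_b
        have h_ge : (0:ℝ) ≤ (∫ x, f x ∂Qn) - ∫ x, fn x ∂Qn := by
          rw [← integral_sub h_f_Qn h_fn_Qn]
          exact integral_nonneg fun x => sub_nonneg.mpr (min_le_left _ _)
        linarith
      have h1 : Filter.Tendsto (fun n : ℕ => ∫ x, Real.exp (min (f x) n) ∂P)
          Filter.atTop (nhds (∫ x, Real.exp (f x) ∂P)) := by
        refine tendsto_integral_of_dominated_convergence (fun x => Real.exp (f x))
          (fun n => (hf.min measurable_const).exp.aestronglyMeasurable) hint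
          (fun n => ae_of_all _ fun x => ?_) (ae_of_all _ fun x => ?_)
        · simp only [Real.norm_eq_abs, abs_of_pos (Real.exp_pos _)]
          exact Real.exp_le_exp.mpr (min_le_left _ _)
        · refine tendsto_atTop_of_eventually_const (i₀ := ⌈f x⌉₊) fun n hn => ?_
          have hle : f x ≤ (n : ℝ) := le_trans (Nat.le_ceil _) (Nat.cast_le.mpr hn)
          rw [min_eq_left hle]
      have h_tendsto : Filter.Tendsto
          (fun n : ℕ => Real.log (∫ x, Real.exp (min (f x) n) ∂P))
          Filter.atTop (nhds (Real.log (∫ x, Real.exp (f x) ∂P))) :=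
        (Real.continuousAt_log hZpos.ne').tendsto.comp h1
      exact le_of_tendsto h_tendsto (Filter.Eventually.of_forall key)
  · intro Q hQprob hlt hfQ
    haveI := hQprob
    obtain ⟨hQP, hllr⟩ := relEnt_lt_top_iff.mp hlt
    rw [relEnt_toReal hQP hllr, ← h_tilt_eq]
    constructor
    · exact (gibbs_ineq P hint Q hQP hllr hfQ).2
    · rintro rfl
      have h_eq : llr (P.tilted f) P =ᵐ[P.tilted f]
          fun x => f x - Real.log (∫ y, Real.exp (f y) ∂P) :=
        (tilted_absolutelyContinuous P f).ae_le (log_rnDeriv_tilted_left_self hint)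
      rw [integral_congr_ae h_eq, integral_sub hfQ (integrable_const _), integral_const]
      simp
end

section
/- Let H be a Hilbert space, A : D(A) ⊂ H → H a linear operator, B : H → H a bounded self-adjoint operator, and x₀ ∈ H with ‖x₀‖ = 1. Suppose ⟨Bx₀, x₀⟩ = 0 and there is D > 0 such that Re⟨Ax, x⟩ ≤ −D‖P⊥x‖² for all x ∈ D(A), where P⊥ is the orthogonal projection onto the orthogonal complement of x₀. Let B⁺ = max{ sup_{‖y‖=1} ⟨By, y⟩, 0 }. Then for any 0 ≤ c < D/B⁺, sup over x ∈ D(A) with ‖x‖ = 1 of Re⟨(A + cB)x, x⟩ ≤ c²‖Bx₀‖² / (D − cB⁺). -/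
open RCLike

/-- Perturbation bound: let `H` be a complex Hilbert space, `A` a linear operator with
domain `Dom`, `B` a bounded self-adjoint operator, `x₀` a unit vector with `⟨Bx₀,x₀⟩ = 0`.
If `Re⟨Ax,x⟩ ≤ −δ‖P⊥x‖²` on the domain (with `P⊥` the projection onto `x₀ᗮ`) then for
`0 ≤ c` with `c·B⁺ < δ`, `Re⟨(A+cB)x,x⟩ ≤ c²‖Bx₀‖²/(δ − cB⁺)` for all unit `x` in the
domain, where `B⁺ = max{sup_{‖y‖=1}⟨By,y⟩, 0}`. -/
theorem perturbation_bound {H : Type*} [NormedAddCommGroup H] [InnerProductSpace ℂ H]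
    [CompleteSpace H]
    (Dom : Submodule ℂ H) (A : Dom →ₗ[ℂ] H) (B : H →L[ℂ] H) (hB : IsSelfAdjoint B)
    (x₀ : H) (hx₀ : ‖x₀‖ = 1) (hBx₀ : inner ℂ (B x₀) x₀ = (0 : ℂ))
    (δ : ℝ) (hδ : 0 < δ)
    (hA : ∀ x : Dom, Complex.re (inner ℂ (A x) (x : H)) ≤
      -δ * ‖(x : H) - (inner ℂ x₀ (x : H) : ℂ) • x₀‖ ^ 2)
    (Bp : ℝ)
    (hBp : Bp = max (sSup {r : ℝ | ∃ y : H, ‖y‖ = 1 ∧ r = Complex.re (inner ℂ (B y) y)}) 0)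
    (c : ℝ) (hc : 0 ≤ c) (hcBp : c * Bp < δ) :
    ∀ x : Dom, ‖(x : H)‖ = 1 →
      Complex.re (inner ℂ (A x + (c : ℂ) • B x) (x : H)) ≤
        c ^ 2 * ‖B x₀‖ ^ 2 / (δ - c * Bp) := by
  intro x hx
  have hsym := ContinuousLinearMap.isSelfAdjoint_iff_isSymmetric.mp hB
  set a : ℂ := inner ℂ x₀ (x : H) with ha
  set v : H := (x : H) - a • x₀ with hv
  have hxdec : (x : H) = a • x₀ + v := by rw [hv]; abel
  have hx₀x₀ : (inner ℂ x₀ x₀ : ℂ) = 1 := by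
    rw [inner_self_eq_norm_sq_to_K (𝕜 := ℂ), hx₀]; norm_num
  have hov : (inner ℂ x₀ v : ℂ) = 0 := by
    simp [hv, inner_sub_right, inner_smul_right, hx₀x₀, hx₀, ha]
  set t : ℝ := ‖v‖ with hts
  set s : ℝ := ‖a‖ with hss
  have hs0 : 0 ≤ s := norm_nonneg a
  have ht0 : 0 ≤ t := norm_nonneg v
  have hBp0 : 0 ≤ Bp := by rw [hBp]; exact le_max_right _ _
  -- ‖v‖² = 1 - |a|²
  have hnorm : t ^ 2 = 1 - s ^ 2 := by
    have h1 : (inner ℂ (x : H) (x : H) : ℂ) = 1 := by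
      rw [inner_self_eq_norm_sq_to_K (𝕜 := ℂ), hx]; norm_num
    have h2 : (inner ℂ v v : ℂ) = (‖v‖ : ℂ) ^ 2 := by
      rw [inner_self_eq_norm_sq_to_K (𝕜 := ℂ)]; norm_cast
    have hva : (inner ℂ v (a • x₀) : ℂ) = 0 := by
      rw [inner_smul_right, ← inner_conj_symm, hov]; simp
    have hav : (inner ℂ (a • x₀) v : ℂ) = 0 := by
      rw [inner_smul_left, hov]; simp
    have h3 : ((starRingEnd ℂ) a) * a = ((‖a‖ : ℝ) : ℂ) ^ 2 := by
      rw [mul_comm, Complex.mul_conj, Complex.normSq_eq_norm_sq]; push_cast; ring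
    have := h1
    rw [hxdec, inner_add_add_self, hva, hav, h2, inner_smul_left, inner_smul_right,
      hx₀x₀, mul_one, h3] at this
    have h4 : ((‖a‖ ^ 2 + ‖v‖ ^ 2 : ℝ) : ℂ) = 1 := by
      push_cast; linear_combination this
    have h5 : ‖a‖ ^ 2 + ‖v‖ ^ 2 = 1 := by exact_mod_cast h4
    rw [hts, hss]; linarith
  -- bound on Re⟨Bv,v⟩
  have hBdd : BddAbove {r : ℝ | ∃ y : H, ‖y‖ = 1 ∧ r = Complex.re (inner ℂ (B y) y)} := by
    refine ⟨‖B‖, ?_⟩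
    rintro r ⟨y, hy, rfl⟩
    calc Complex.re (inner ℂ (B y) y) ≤ ‖(inner ℂ (B y) y : ℂ)‖ := Complex.re_le_norm _
      _ ≤ ‖B y‖ * ‖y‖ := norm_inner_le_norm _ _
      _ ≤ ‖B‖ * ‖y‖ * ‖y‖ := by gcongr; exact B.le_opNorm y
      _ = ‖B‖ := by rw [hy]; ring
  have hBvv : Complex.re (inner ℂ (B v) v) ≤ Bp * t ^ 2 := by
    rcases eq_or_ne v 0 with h0 | h0
    · have ht : t = 0 := by rw [hts, h0, norm_zero]
      simp [h0, ht]
    · have htpos : 0 < t := norm_pos_iff.mpr h0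
      set y : H := ((t : ℂ))⁻¹ • v with hy
      have hyn : ‖y‖ = 1 := by
        rw [hy, norm_smul, norm_inv, Complex.norm_real, Real.norm_eq_abs,
          abs_of_pos htpos]
        field_simp
        exact hts.symm
      have hmem : Complex.re (inner ℂ (B y) y) ∈
          {r : ℝ | ∃ y : H, ‖y‖ = 1 ∧ r = Complex.re (inner ℂ (B y) y)} := ⟨y, hyn, rfl⟩
      have hle : Complex.re (inner ℂ (B y) y) ≤ Bp := by
        rw [hBp]
        exact le_max_of_le_left (le_csSup hBdd hmem)
      have key : (inner ℂ (B y) y : ℂ) = (((t ^ 2)⁻¹ : ℝ) : ℂ) * inner ℂ (B v) v := by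
        rw [hy, map_smul, inner_smul_left, inner_smul_right, map_inv₀,
          Complex.conj_ofReal]
        push_cast
        ring
      have hexp : Complex.re (inner ℂ (B v) v) = t ^ 2 * Complex.re (inner ℂ (B y) y) := by
        rw [key, Complex.re_ofReal_mul]
        field_simp
      rw [hexp]
      calc t ^ 2 * Complex.re (inner ℂ (B y) y) ≤ t ^ 2 * Bp := by nlinarith
        _ = Bp * t ^ 2 := by ring
  -- expand Re⟨Bx,x⟩
  have hBx : Complex.re (inner ℂ (B (x : H)) (x : H)) ≤ 2 * s * ‖B x₀‖ * t + Bp * t ^ 2 := by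
    set w : ℂ := inner ℂ (B x₀) v with hw
    have hexp : (inner ℂ (B (x : H)) (x : H) : ℂ) =
        (starRingEnd ℂ) a * w + a * (starRingEnd ℂ) w + inner ℂ (B v) v := by
      have hsw : (inner ℂ (B v) x₀ : ℂ) = (starRingEnd ℂ) w := by
        rw [hw, ← inner_conj_symm]
        exact congrArg _ (hsym x₀ v).symm
      rw [hxdec]
      simp only [map_add, map_smul, inner_add_left, inner_add_right, inner_smul_left,
        inner_smul_right, hBx₀, hsw]
      ring
    have h2re : Complex.re ((starRingEnd ℂ) a * w + a * (starRingEnd ℂ) w + inner ℂ (B v) v)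
        = 2 * Complex.re ((starRingEnd ℂ) a * w) + Complex.re (inner ℂ (B v) v) := by
      have hconj : a * (starRingEnd ℂ) w = (starRingEnd ℂ) ((starRingEnd ℂ) a * w) := by
        rw [map_mul]; simp
      rw [Complex.add_re, Complex.add_re, hconj, Complex.conj_re]; ring
    have habs : Complex.re ((starRingEnd ℂ) a * w) ≤ s * (‖B x₀‖ * t) := by
      calc Complex.re ((starRingEnd ℂ) a * w) ≤ ‖(starRingEnd ℂ) a * w‖ :=
            Complex.re_le_norm _
        _ = s * ‖w‖ := by rw [norm_mul, RCLike.norm_conj]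
        _ ≤ s * (‖B x₀‖ * t) := by
            gcongr
            exact norm_inner_le_norm _ _
    rw [hexp, h2re]
    nlinarith
  have hfin : Complex.re (inner ℂ (A x + (c : ℂ) • B x) (x : H)) ≤
      -δ * t ^ 2 + c * (2 * s * ‖B x₀‖ * t + Bp * t ^ 2) := by
    rw [inner_add_left, Complex.add_re, inner_smul_left]
    have hcre : Complex.re ((starRingEnd ℂ) (c : ℂ) * inner ℂ (B (x : H)) (x : H)) =
        c * Complex.re (inner ℂ (B (x : H)) (x : H)) := by
      rw [Complex.conj_ofReal, Complex.re_ofReal_mul]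
    rw [hcre]
    have h2 : c * Complex.re (inner ℂ (B (x : H)) (x : H)) ≤
        c * (2 * s * ‖B x₀‖ * t + Bp * t ^ 2) := mul_le_mul_of_nonneg_left hBx hc
    have h1 := hA x
    rw [← ha, ← hv, ← hts] at h1
    linarith
  have hKpos : 0 < δ - c * Bp := by linarith
  have hs1 : s ≤ 1 := by nlinarith
  have hM : 0 ≤ ‖B x₀‖ := norm_nonneg _
  rw [le_div_iff₀ hKpos]
  nlinarith [sq_nonneg ((δ - c * Bp) * t - c * ‖B x₀‖), mul_nonneg (mul_nonneg hc hM) ht0,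
    mul_nonneg hc hBp0, sq_nonneg t, mul_nonneg (mul_nonneg (mul_nonneg hc hM) ht0) (sub_nonneg.mpr hs1)]
end

section
/- Let p and p̃ be Markov transition kernels on a Polish space 𝒳 with p̃(x,·) ≪ p(x,·) for μ̃-a.e. x, where μ̃ ≪ μ are probability measures on 𝒳 and (P̃*)ⁿ[μ̃] ≪ μ̃ for all n. Then the n-step path measures satisfy μ̃ ⊗₁ⁿ p̃ ≪ μ ⊗₁ⁿ p on 𝒳^{n+1}, with density d(μ̃⊗₁ⁿp̃)/d(μ⊗₁ⁿp)(x₀,...,xₙ) = (dμ̃/dμ)(x₀) · Π_{i=1}^n h(x_{i−1}, x_i), where h(x,y) = dp̃(x,·)/dp(x,·)(y). -/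
open MeasureTheory ProbabilityTheory ENNReal

section Aux

variable {𝒳 : Type*} [MeasurableSpace 𝒳]

lemma measurable_snoc2 {n : ℕ} :
    Measurable (fun q : (Fin (n+1) → 𝒳) × 𝒳 => (Fin.snoc q.1 q.2 : Fin (n+2) → 𝒳)) := by
  apply measurable_pi_lambda
  intro i
  induction i using Fin.lastCases with
  | last => simpa [Fin.snoc_last] using measurable_snd
  | cast j => simpa [Fin.snoc_castSucc] using (show Measurable fun c : (Fin (n+1) → 𝒳) × 𝒳 => c.1 j from (measurable_pi_apply j).comp measurable_fst)

lemma measurable_step {n : ℕ} (q : Kernel 𝒳 𝒳) [IsSFiniteKernel q] :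
    Measurable (fun ω : Fin (n+1) → 𝒳 =>
      (q (ω (Fin.last n))).map (fun y => (Fin.snoc ω y : Fin (n+2) → 𝒳))) := by
  rw [Measure.measurable_measure]
  intro s hs
  have hsnoc : ∀ ω : Fin (n+1) → 𝒳, Measurable (fun y => (Fin.snoc ω y : Fin (n+2) → 𝒳)) :=
    fun ω => measurable_snoc2.comp measurable_prodMk_left
  have hrw : ∀ ω : Fin (n+1) → 𝒳, (q (ω (Fin.last n))).map
      (fun y => (Fin.snoc ω y : Fin (n+2) → 𝒳)) s
      = q (ω (Fin.last n)) {y | (Fin.snoc ω y : Fin (n+2) → 𝒳) ∈ s} := fun ω =>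
    Measure.map_apply (hsnoc ω) hs
  simp_rw [hrw]
  have := Kernel.measurable_kernel_prodMk_left
    (κ := q.comap (fun ω : Fin (n+1) → 𝒳 => ω (Fin.last n)) (measurable_pi_apply _))
    (measurable_snoc2 hs)
  simpa [Kernel.comap_apply, Set.preimage] using this

lemma measurable_step' {n : ℕ} (p : Kernel 𝒳 𝒳) [IsSFiniteKernel p]
    (h : 𝒳 × 𝒳 → ℝ≥0∞) (hhmeas : Measurable h) :
    Measurable (fun ω : Fin (n+1) → 𝒳 =>
      ((p (ω (Fin.last n))).withDensity (fun y => h (ω (Fin.last n), y))).map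
        (fun y => (Fin.snoc ω y : Fin (n+2) → 𝒳))) := by
  rw [Measure.measurable_measure]
  intro s hs
  have hsnoc : ∀ ω : Fin (n+1) → 𝒳, Measurable (fun y => (Fin.snoc ω y : Fin (n+2) → 𝒳)) :=
    fun ω => measurable_snoc2.comp measurable_prodMk_left
  have hrw : ∀ ω : Fin (n+1) → 𝒳,
      ((p (ω (Fin.last n))).withDensity (fun y => h (ω (Fin.last n), y))).map
        (fun y => (Fin.snoc ω y : Fin (n+2) → 𝒳)) s
      = ∫⁻ y, ({q : (Fin (n+1) → 𝒳) × 𝒳 | (Fin.snoc q.1 q.2 : Fin (n+2) → 𝒳) ∈ s}.indicator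
          (fun q => h (q.1 (Fin.last n), q.2))) (ω, y) ∂(p (ω (Fin.last n))) := by
    intro ω
    rw [Measure.map_apply (hsnoc ω) hs,
      withDensity_apply _ ((hsnoc ω) hs)]
    refine Eq.trans (lintegral_indicator ((hsnoc ω) hs) _).symm
      (lintegral_congr fun y => ?_)
    by_cases hy : (Fin.snoc ω y : Fin (n+2) → 𝒳) ∈ s <;>
      simp [Set.indicator_apply, hy]
  simp_rw [hrw]
  have hF : Measurable ({q : (Fin (n+1) → 𝒳) × 𝒳 | (Fin.snoc q.1 q.2 : Fin (n+2) → 𝒳) ∈ s}.indicator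
      (fun q => h (q.1 (Fin.last n), q.2))) :=
    (hhmeas.comp (((measurable_pi_apply _).comp measurable_fst).prodMk
      measurable_snd)).indicator (measurable_snoc2 hs)
  exact hF.lintegral_kernel_prod_right' (κ := p.comap (fun ω : Fin (n+1) → 𝒳 => ω (Fin.last n))
    (measurable_pi_apply _))

lemma D_snoc {n : ℕ} (g : 𝒳 → ℝ≥0∞) (h : 𝒳 × 𝒳 → ℝ≥0∞)
    (ω : Fin (n+1) → 𝒳) (y : 𝒳) :
    g ((Fin.snoc ω y : Fin (n+2) → 𝒳) 0) *
      ∏ i : Fin (n+1), h ((Fin.snoc ω y : Fin (n+2) → 𝒳) i.castSucc,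
        (Fin.snoc ω y : Fin (n+2) → 𝒳) i.succ)
    = (g (ω 0) * ∏ i : Fin n, h (ω i.castSucc, ω i.succ)) * h (ω (Fin.last n), y) := by
  have h0 : (Fin.snoc ω y : Fin (n+2) → 𝒳) 0 = ω 0 := by
    rw [show (0 : Fin (n+2)) = Fin.castSucc 0 by simp, Fin.snoc_castSucc]
  rw [h0, Fin.prod_univ_castSucc, mul_assoc]
  congr 1
  simp [-Fin.castSucc_succ, Fin.succ_castSucc, Fin.snoc_castSucc, Fin.succ_last, Fin.snoc_last]

end Aux

/-- The `n`-step path measure `μ ⊗₁ⁿ p` on `𝒳^{n+1}` of a Markov chain with initial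
distribution `μ` and one-step transition kernel `p`. -/
noncomputable def pathMeasure {𝒳 : Type*} [MeasurableSpace 𝒳] (μ : Measure 𝒳)
    (p : Kernel 𝒳 𝒳) : (n : ℕ) → Measure (Fin (n + 1) → 𝒳)
  | 0 => μ.map (fun x => fun _ => x)
  | n + 1 => (pathMeasure μ p n).bind
      (fun ω => (p (ω (Fin.last n))).map (fun y => Fin.snoc ω y))

/-- Density of path measures: if `μ̃ ≪ μ`, `p̃(x,·) ≪ p(x,·)` for `μ̃`-a.e. `x` with
kernel density `h`, and the iterates `(P̃*)ⁿ[μ̃]` are absolutely continuous w.r.t. `μ̃`,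
then `μ̃ ⊗₁ⁿ p̃ ≪ μ ⊗₁ⁿ p` with density
`(dμ̃/dμ)(x₀) ∏_{i=1}^n h(x_{i−1}, x_i)`. -/
theorem path_measure_density {𝒳 : Type*} [MeasurableSpace 𝒳] [TopologicalSpace 𝒳]
    [PolishSpace 𝒳] [BorelSpace 𝒳]
    (μ mutilde : Measure 𝒳) [IsProbabilityMeasure μ] [IsProbabilityMeasure mutilde]
    (p ptilde : Kernel 𝒳 𝒳) [IsMarkovKernel p] [IsMarkovKernel ptilde]
    (hac : mutilde ≪ μ)
    (h : 𝒳 × 𝒳 → ℝ≥0∞) (hhmeas : Measurable h)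
    (hh : ∀ᵐ x ∂mutilde, ptilde x = (p x).withDensity (fun y => h (x, y)))
    (ν : ℕ → Measure 𝒳) (hν0 : ν 0 = mutilde)
    (hνsucc : ∀ n : ℕ, ν (n + 1) = (ν n).bind (fun x => ptilde x))
    (hνac : ∀ n : ℕ, ν n ≪ mutilde) :
    ∀ n : ℕ,
      pathMeasure mutilde ptilde n ≪ pathMeasure μ p n ∧
      pathMeasure mutilde ptilde n = (pathMeasure μ p n).withDensity
        (fun ω => mutilde.rnDeriv μ (ω 0) *
          ∏ i : Fin n, h (ω i.castSucc, ω i.succ)) := by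
  -- measurability of the density
  have hDmeas : ∀ m : ℕ, Measurable (fun ω : Fin (m+1) → 𝒳 =>
      mutilde.rnDeriv μ (ω 0) * ∏ i : Fin m, h (ω i.castSucc, ω i.succ)) := by
    intro m
    exact ((mutilde.measurable_rnDeriv μ).comp (measurable_pi_apply 0)).mul
      (Finset.measurable_prod _ fun i _ => hhmeas.comp
        ((measurable_pi_apply _).prodMk (measurable_pi_apply _)))
  -- the marginal of the path measure at the last coordinate is ν n
  have hmarg : ∀ n : ℕ,
      (pathMeasure mutilde ptilde n).map (fun ω => ω (Fin.last n)) = ν n := by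
    intro n
    induction n with
    | zero =>
      have hc : Measurable (fun x : 𝒳 => (fun _ : Fin 1 => x)) :=
        measurable_pi_lambda _ fun _ => measurable_id
      rw [hν0, pathMeasure, Measure.map_map (measurable_pi_apply _) hc]
      exact Measure.map_id
    | succ n ih =>
      rw [pathMeasure, hνsucc, ← ih]
      ext s hs
      rw [Measure.map_apply (measurable_pi_apply _) hs,
        Measure.bind_apply ((measurable_pi_apply _) hs) (measurable_step ptilde).aemeasurable,
        Measure.bind_apply hs ptilde.measurable.aemeasurable,
        lintegral_map (f := fun x => ptilde x s)
          ((Measure.measurable_coe hs).comp ptilde.measurable) (measurable_pi_apply _)]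
      apply lintegral_congr
      intro ω
      have hsnoc : Measurable (fun y => (Fin.snoc ω y : Fin (n+2) → 𝒳)) :=
        measurable_snoc2.comp measurable_prodMk_left
      rw [Measure.map_apply hsnoc ((measurable_pi_apply _) hs)]
      congr 1
      ext y
      simp [Fin.snoc_last]
  -- the density identity, by induction
  have key : ∀ n : ℕ,
      pathMeasure mutilde ptilde n = (pathMeasure μ p n).withDensity
        (fun ω => mutilde.rnDeriv μ (ω 0) *
          ∏ i : Fin n, h (ω i.castSucc, ω i.succ)) := by
    intro n
    induction n with
    | zero =>
      rw [pathMeasure, pathMeasure]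
      ext s hs
      have hc : Measurable (fun x : 𝒳 => (fun _ : Fin 1 => x)) :=
        measurable_pi_lambda _ fun _ => measurable_id
      rw [Measure.map_apply hc hs, withDensity_apply _ hs,
        setLIntegral_map hs (hDmeas 0) hc,
        ← Measure.setLIntegral_rnDeriv hac _]
      apply setLIntegral_congr_fun (hc hs)
      exact fun x _ => by simp
    | succ n ih =>
      -- replace the kernel ptilde by its withDensity version, a.e.
      have hae : ∀ᵐ ω ∂(pathMeasure mutilde ptilde n),
          ptilde (ω (Fin.last n)) =
            (p (ω (Fin.last n))).withDensity (fun y => h (ω (Fin.last n), y)) := by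
        have h1 : ∀ᵐ x ∂(ν n), ptilde x = (p x).withDensity (fun y => h (x, y)) :=
          (hνac n).ae_le hh
        rw [← hmarg n] at h1
        exact ae_of_ae_map (measurable_pi_apply _).aemeasurable h1
      have hstep : pathMeasure mutilde ptilde (n+1)
          = (pathMeasure mutilde ptilde n).bind (fun ω =>
              ((p (ω (Fin.last n))).withDensity (fun y => h (ω (Fin.last n), y))).map
                (fun y => (Fin.snoc ω y : Fin (n+2) → 𝒳))) := by
        rw [pathMeasure, Measure.bind, Measure.bind,
          Measure.map_congr (hae.mono fun ω hω => by rw [hω])]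
      rw [hstep, ih, pathMeasure]
      ext s hs
      have hsnoc : ∀ ω : Fin (n+1) → 𝒳,
          Measurable (fun y => (Fin.snoc ω y : Fin (n+2) → 𝒳)) :=
        fun ω => measurable_snoc2.comp measurable_prodMk_left
      have hκ' := measurable_step' (n := n) p h hhmeas
      have hco : Measurable (fun ω : Fin (n+1) → 𝒳 =>
          ((p (ω (Fin.last n))).withDensity (fun y => h (ω (Fin.last n), y))).map
            (fun y => (Fin.snoc ω y : Fin (n+2) → 𝒳)) s) :=
        (Measure.measurable_coe hs).comp hκ'
      rw [Measure.bind_apply hs hκ'.aemeasurable,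
        lintegral_withDensity_eq_lintegral_mul _ (hDmeas n) hco,
        withDensity_apply _ hs, ← lintegral_indicator hs,
        Measure.lintegral_bind (measurable_step p).aemeasurable ((hDmeas (n+1)).indicator hs).aemeasurable]
      apply lintegral_congr
      intro ω
      simp only [Pi.mul_apply]
      rw [lintegral_map ((hDmeas (n+1)).indicator hs) (hsnoc ω),
        Measure.map_apply (hsnoc ω) hs, withDensity_apply _ ((hsnoc ω) hs),
        ← lintegral_indicator ((hsnoc ω) hs),
        ← lintegral_const_mul _
          ((show Measurable (fun y => h (ω (Fin.last n), y)) from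
            hhmeas.comp (measurable_const.prodMk measurable_id)).indicator
            ((hsnoc ω) hs))]
      apply lintegral_congr
      intro y
      by_cases hy : (Fin.snoc ω y : Fin (n+2) → 𝒳) ∈ s
      · rw [Set.indicator_of_mem hy, Set.indicator_of_mem (show y ∈ _ from hy)]
        exact (D_snoc (mutilde.rnDeriv μ) h ω y).symm
      · rw [Set.indicator_of_notMem hy, Set.indicator_of_notMem (show y ∉ _ from hy),
          mul_zero]
  intro n
  exact ⟨(key n) ▸ withDensity_absolutelyContinuous _ _, key n⟩
end

section
/- Let A generate a Markov semigroup on L²(μ*) with invariant measure μ* and suppose the Poincaré inequality Var_{μ*}(g) ≤ −α⟨Ag,g⟩ holds for all real g ∈ D(A), with α > 0. For bounded measurable f let V_c = c(f − μ*[f]) and κ as above. Then for all 0 ≤ c < 1/(α‖(f − μ*[f])⁺‖_∞): κ(V_c) ≤ α Var_{μ*}[f] c² / (1 − α‖(f − μ*[f])⁺‖_∞ c). -/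
set_option maxHeartbeats 1000000


open MeasureTheory Real ENNReal

/-- Cauchy–Schwarz inequality for integrals of real functions. -/
lemma integral_cauchy_schwarz {Ω : Type*} [MeasurableSpace Ω] (μ : Measure Ω)
    (F h : Ω → ℝ) (hF2 : Integrable (fun x => F x ^ 2) μ)
    (hh2 : Integrable (fun x => h x ^ 2) μ)
    (hFh : Integrable (fun x => F x * h x) μ) :
    (∫ x, F x * h x ∂μ) ^ 2 ≤ (∫ x, F x ^ 2 ∂μ) * ∫ x, h x ^ 2 ∂μ := by
  have key : ∀ t : ℝ, 0 ≤ (∫ x, F x ^ 2 ∂μ) * (t * t) +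
      (2 * ∫ x, F x * h x ∂μ) * t + ∫ x, h x ^ 2 ∂μ := by
    intro t
    have h0 : 0 ≤ ∫ x, (t * F x + h x) ^ 2 ∂μ :=
      integral_nonneg fun x => sq_nonneg _
    have hexp : (fun x => (t * F x + h x) ^ 2) =
        fun x => t ^ 2 * F x ^ 2 + 2 * t * (F x * h x) + h x ^ 2 := by
      funext x; ring
    rw [hexp] at h0
    have i1 : Integrable (fun x => t ^ 2 * F x ^ 2) μ := hF2.const_mul _
    have i2 : Integrable (fun x => 2 * t * (F x * h x)) μ := hFh.const_mul _
    have i12 : Integrable (fun x => t ^ 2 * F x ^ 2 + 2 * t * (F x * h x)) μ := i1.add i2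
    rw [integral_add i12 hh2, integral_add i1 i2,
      integral_const_mul, integral_const_mul] at h0
    nlinarith [h0]
  have hd := discrim_le_zero key
  rw [discrim] at hd
  nlinarith [hd]

/-- Poincaré bound on the Feynman–Kac principal eigenvalue: if the generator `(A, D)` on
`L²(μ)` satisfies the Poincaré inequality `Var_μ(g) ≤ −α⟨Ag,g⟩`, then for bounded
measurable `f`, with `V_c = c(f − μ[f])` and `M⁺ = ‖(f − μ[f])⁺‖_∞`, one has for all
`0 ≤ c < 1/(αM⁺)`:
`κ(V_c) ≤ α Var_μ[f] c² / (1 − αM⁺c)`. -/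
theorem poincare_kappa_bound {Ω : Type*} [MeasurableSpace Ω]
    (μ : Measure Ω) [IsProbabilityMeasure μ]
    (D : Set (Ω → ℝ)) (A : (Ω → ℝ) → (Ω → ℝ))
    (hD : ∀ g ∈ D, MemLp g 2 μ ∧ MemLp (A g) 2 μ)
    (α : ℝ) (hα : 0 < α)
    (hPoincare : ∀ g ∈ D,
      (∫ x, g x ^ 2 ∂μ) - (∫ x, g x ∂μ) ^ 2 ≤ -α * ∫ x, A g x * g x ∂μ)
    (f : Ω → ℝ) (hf : Measurable f) (hfbdd : ∃ C : ℝ, ∀ x, |f x| ≤ C)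
    (Mp : ℝ)
    (hMp : Mp = (eLpNorm (fun x => max (f x - ∫ y, f y ∂μ) 0) ⊤ μ).toReal) :
    ∀ c : ℝ, 0 ≤ c → c * (α * Mp) < 1 →
      sSup {r : ℝ | ∃ g ∈ D, (∫ x, g x ^ 2 ∂μ) = 1 ∧
          r = (∫ x, A g x * g x ∂μ) + ∫ x, c * (f x - ∫ y, f y ∂μ) * g x ^ 2 ∂μ} ≤
        α * ((∫ x, f x ^ 2 ∂μ) - (∫ x, f x ∂μ) ^ 2) * c ^ 2 / (1 - α * Mp * c) := by
  intro c hc hcb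
  obtain ⟨C, hC⟩ := hfbdd
  set m : ℝ := ∫ y, f y ∂μ with hm
  set F : Ω → ℝ := fun x => f x - m with hF
  -- basic facts about f and F
  have hFbdd : ∀ x, |F x| ≤ |C| + |m| := fun x => by
    have := hC x
    simp only [hF]
    calc |f x - m| ≤ |f x| + |m| := abs_sub _ _
    _ ≤ |C| + |m| := by have := le_abs_self C; linarith
  have hFmeas : Measurable F := hf.sub measurable_const
  have hF2 : MemLp F 2 μ :=
    MemLp.of_bound hFmeas.aestronglyMeasurable (|C| + |m|)
      (Filter.Eventually.of_forall fun x => by simpa using hFbdd x)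
  have hFint : Integrable F μ := hF2.integrable one_le_two
  have hF2int : Integrable (fun x => F x ^ 2) μ := hF2.integrable_sq
  have hfmem : MemLp f 2 μ :=
    MemLp.of_bound hf.aestronglyMeasurable C
      (Filter.Eventually.of_forall fun x => by simpa using hC x)
  have hfint : Integrable f μ := hfmem.integrable one_le_two
  have hf2int : Integrable (fun x => f x ^ 2) μ := hfmem.integrable_sq
  -- ∫ F = 0
  have hFzero : ∫ x, F x ∂μ = 0 := by
    simp only [hF]
    rw [integral_sub hfint (integrable_const m), integral_const]
    simp [hm]
  -- Var f
  set Vf : ℝ := ∫ x, F x ^ 2 ∂μ with hVf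
  have hVf0 : 0 ≤ Vf := integral_nonneg fun x => sq_nonneg _
  have hVfeq : Vf = (∫ x, f x ^ 2 ∂μ) - (∫ x, f x ∂μ) ^ 2 := by
    have hexp : (fun x => F x ^ 2) = fun x => f x ^ 2 - (2 * m) * f x + m ^ 2 := by
      funext x; simp only [hF]; ring
    have i1 : Integrable (fun x => f x ^ 2 - 2 * m * f x) μ := hf2int.sub (hfint.const_mul _)
    rw [hVf, hexp,
      integral_add i1 (integrable_const _),
      integral_sub hf2int (hfint.const_mul _), integral_const_mul, integral_const]
    simp [hm]
    ring
  -- a.e. bound F ≤ Mp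
  have hMp0 : 0 ≤ Mp := by rw [hMp]; exact ENNReal.toReal_nonneg
  have hFleMp : ∀ᵐ x ∂μ, F x ≤ Mp := by
    set P : Ω → ℝ := fun x => max (F x) 0 with hP
    have hPbdd : ∀ᵐ x ∂μ, ‖P x‖ ≤ |C| + |m| :=
      Filter.Eventually.of_forall fun x => by
        simp only [hP, Real.norm_eq_abs]
        rw [abs_of_nonneg (le_max_right (F x) 0)]
        exact le_trans (max_le (le_abs_self _) (abs_nonneg _)) (hFbdd x)
    have hfin : eLpNormEssSup P μ < ⊤ := eLpNormEssSup_lt_top_of_ae_bound hPbdd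
    have hae := enorm_ae_le_eLpNormEssSup P μ
    filter_upwards [hae] with x hx
    have h1 : ‖P x‖ ≤ (eLpNormEssSup P μ).toReal := by
      have := ENNReal.toReal_mono hfin.ne hx
      simpa [coe_nnnorm] using this
    have h2 : F x ≤ ‖P x‖ := by
      simp only [hP, Real.norm_eq_abs]
      exact le_trans (le_max_left _ _) (le_abs_self _)
    have h3 : Mp = (eLpNormEssSup P μ).toReal := by
      rw [hMp, eLpNorm_exponent_top]
    linarith
  -- setup β
  set β : ℝ := 1 / α - c * Mp with hβdef
  have hαMc : α * Mp * c < 1 := by nlinarith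
  have hβ : 0 < β := by
    rw [hβdef, sub_pos, lt_div_iff₀ hα]
    nlinarith
  have hden : 1 - α * Mp * c = α * β := by
    rw [hβdef]; field_simp
  -- rewrite RHS
  rw [← hVfeq, hden]
  have hRHS : α * Vf * c ^ 2 / (α * β) = c ^ 2 * Vf / β := by
    rw [div_eq_div_iff (by positivity) hβ.ne']
    ring
  rw [hRHS]
  have hRHS0 : 0 ≤ c ^ 2 * Vf / β :=
    div_nonneg (mul_nonneg (sq_nonneg _) hVf0) hβ.le
  apply Real.sSup_le _ hRHS0
  rintro r ⟨g, hgD, hg1, rfl⟩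
  obtain ⟨hg2, hAg2⟩ := hD g hgD
  set b : ℝ := ∫ x, g x ∂μ with hb
  set h : Ω → ℝ := fun x => g x - b with hh
  have hgint : Integrable g μ := hg2.integrable one_le_two
  have hh2 : MemLp h 2 μ := hg2.sub (memLp_const b)
  have hhint : Integrable h μ := hh2.integrable one_le_two
  have hh2int : Integrable (fun x => h x ^ 2) μ := hh2.integrable_sq
  have hg2int : Integrable (fun x => g x ^ 2) μ := hg2.integrable_sq
  set v : ℝ := ∫ x, h x ^ 2 ∂μ with hv
  have hv0 : 0 ≤ v := integral_nonneg fun x => sq_nonneg _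
  have hveq : v = 1 - b ^ 2 := by
    have hexp : (fun x => h x ^ 2) = fun x => g x ^ 2 - (2 * b) * g x + b ^ 2 := by
      funext x; simp only [hh]; ring
    have i1 : Integrable (fun x => g x ^ 2 - 2 * b * g x) μ := hg2int.sub (hgint.const_mul _)
    rw [hv, hexp,
      integral_add i1 (integrable_const _),
      integral_sub hg2int (hgint.const_mul _), integral_const_mul, integral_const]
    simp [hb, hg1]
    ring
  have hbsq : b ^ 2 ≤ 1 := by linarith
  -- Poincaré bound
  have hPg := hPoincare g hgD
  rw [hg1] at hPg
  have hI : (∫ x, A g x * g x ∂μ) ≤ -v / α := by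
    rw [le_div_iff₀ hα]
    rw [← hb] at hPg
    nlinarith [hPg]
  -- decompose the potential integral
  have hFhint : Integrable (fun x => F x * h x) μ :=
    hhint.bdd_mul hFmeas.aestronglyMeasurable
      (c := |C| + |m|) (Filter.Eventually.of_forall fun x => by simpa using hFbdd x)
  have hFh2int : Integrable (fun x => F x * h x ^ 2) μ :=
    hh2int.bdd_mul hFmeas.aestronglyMeasurable
      (c := |C| + |m|) (Filter.Eventually.of_forall fun x => by simpa using hFbdd x)
  set t : ℝ := ∫ x, F x * h x ∂μ with ht
  have hJ : (∫ x, c * (f x - m) * g x ^ 2 ∂μ) =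
      c * ((∫ x, F x * h x ^ 2 ∂μ) + 2 * b * t) := by
    have hexp : (fun x => c * (f x - m) * g x ^ 2) =
        fun x => c * (F x * h x ^ 2 + (2 * b) * (F x * h x) + b ^ 2 * F x) := by
      funext x; simp only [hF, hh]; ring
    have i1 : Integrable (fun x => 2 * b * (F x * h x)) μ := hFhint.const_mul _
    have i2 : Integrable (fun x => F x * h x ^ 2 + 2 * b * (F x * h x)) μ := hFh2int.add i1
    rw [hexp, integral_const_mul,
      integral_add i2 (hFint.const_mul _),
      integral_add hFh2int i1,
      integral_const_mul, integral_const_mul, hFzero]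
    ring
  -- bound 1 : ∫ F h² ≤ Mp v
  have hB1 : (∫ x, F x * h x ^ 2 ∂μ) ≤ Mp * v := by
    have hmono : (∫ x, F x * h x ^ 2 ∂μ) ≤ ∫ x, Mp * h x ^ 2 ∂μ := by
      apply integral_mono_ae hFh2int (hh2int.const_mul _)
      filter_upwards [hFleMp] with x hx
      exact mul_le_mul_of_nonneg_right hx (sq_nonneg _)
    rwa [integral_const_mul] at hmono
  -- bound 2 : Cauchy–Schwarz
  have hB2 : t ^ 2 ≤ Vf * v :=
    integral_cauchy_schwarz μ F h hF2int hh2int hFhint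
  -- key algebraic estimate
  have hB3 : 2 * b * t * c ≤ β * v + c ^ 2 * Vf / β := by
    have key : 2 * b * t * c * β ≤ β ^ 2 * v + c ^ 2 * Vf := by
      nlinarith [sq_nonneg (β ^ 2 * v - c ^ 2 * Vf),
        mul_nonneg (mul_nonneg (sq_nonneg c) (sq_nonneg β)) (sub_nonneg.mpr hB2),
        mul_nonneg (mul_nonneg (mul_nonneg (sq_nonneg c) (sq_nonneg β)) (sq_nonneg t))
          (sub_nonneg.mpr hbsq),
        mul_nonneg (sq_nonneg β) hv0, mul_nonneg (sq_nonneg c) hVf0]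
    have h2 : 2 * b * t * c ≤ (β ^ 2 * v + c ^ 2 * Vf) / β := by
      rw [le_div_iff₀ hβ]; linarith
    have h3 : (β ^ 2 * v + c ^ 2 * Vf) / β = β * v + c ^ 2 * Vf / β := by
      field_simp
    rwa [h3] at h2
  -- combine
  rw [hJ]
  have hc1 : c * ((∫ x, F x * h x ^ 2 ∂μ) + 2 * b * t) ≤ c * Mp * v + 2 * b * t * c := by
    have := mul_le_mul_of_nonneg_left hB1 hc
    linarith [this]
  have hfinal : -v / α + c * Mp * v + β * v = 0 := by
    rw [hβdef]; ring
  linarith [hI, hc1, hB3, hfinal]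
end
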